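/- Let n ≥ 4 and let w ∈ W be a basic involution with w(1) = −n. Let u = s_n s_{n−2} s_{n−3}⋯s_2 s_1 (the element u of the previous construction for j = n, i.e. u(1) = −n, u(i) = i−1 for 2 ≤ i ≤ n−1, u(n) = −(n−1)), let v = u^{−1}w, and let g_0 = u s_1 (so g_0(1) = 1, g_0(2) = −n, g_0(i) = i−1 for 3 ≤ i ≤ n−1, g_0(n) = −(n−1)). Then g_0 ≤ v^{−1} in the Bruhat order on W. -/

import Mathlib

/-!
The Weyl group of type `Dₙ`, realized as the group of permutations `w` of `ℤ`
supported on `{±1, …, ±n}` with `w (-i) = - w i` and an even number of sign changes.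
-/

open Equiv

/-- The simple reflections of type `Dₙ`, indexed by `i ∈ {1, …, n}`:
`sᵢ = (i, i+1)(-i, -(i+1))` for `1 ≤ i ≤ n - 1`, and
`sₙ = (n-1, -n)(-(n-1), n)`. -/
def simpleRefl (n : ℕ) (i : ℕ) : Equiv.Perm ℤ :=
  if i < n then Equiv.swap (i : ℤ) ((i : ℤ) + 1) * Equiv.swap (-(i : ℤ)) (-((i : ℤ) + 1))
  else Equiv.swap ((n : ℤ) - 1) (-(n : ℤ)) * Equiv.swap (-((n : ℤ) - 1)) (n : ℤ)

/-- A word in the letters `{1, …, n}` (indices of simple reflections). -/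
def IsWord (n : ℕ) (L : List ℕ) : Prop := ∀ i ∈ L, 1 ≤ i ∧ i ≤ n

/-- The product `s_{i₁} ⋯ s_{i_l}` of the word `L = [i₁, …, i_l]`. -/
def wordProd (n : ℕ) (L : List ℕ) : Equiv.Perm ℤ := (L.map (simpleRefl n)).prod

/-- Membership in the Weyl group `W` of type `Dₙ`: a permutation of `ℤ` commuting with
negation, fixing every integer of absolute value `> n`, and with an even number of
`i ∈ {1, …, n}` such that `w i < 0`. -/
def IsD (n : ℕ) (w : Equiv.Perm ℤ) : Prop :=
  (∀ i : ℤ, w (-i) = -(w i)) ∧ (∀ i : ℤ, (n : ℤ) < |i| → w i = i) ∧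
    Even (((Finset.Icc (1 : ℤ) (n : ℤ)).filter fun i => w i < 0).card)

/-- The length `ℓ(w)`: the minimal number of factors in an expression of `w` as a
product of simple reflections. -/
noncomputable def weylLength (n : ℕ) (w : Equiv.Perm ℤ) : ℕ :=
  sInf {l | ∃ L : List ℕ, IsWord n L ∧ L.length = l ∧ wordProd n L = w}

/-- `L` is a reduced decomposition of `w`. -/
def IsReducedWord (n : ℕ) (w : Equiv.Perm ℤ) (L : List ℕ) : Prop :=
  IsWord n L ∧ wordProd n L = w ∧ L.length = weylLength n w

/-- `w` is a basic involution: `w ∈ W`, `w² = id`, and `w i ≠ -i` for all `i ∈ {1, …, n}`. -/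
def IsBasicInvolution (n : ℕ) (w : Equiv.Perm ℤ) : Prop :=
  IsD n w ∧ w * w = 1 ∧ ∀ i : ℤ, 1 ≤ i → i ≤ (n : ℤ) → w i ≠ -i

/-- The Bruhat order: `v ≤ w` iff some reduced decomposition of `v` is a subword of
some reduced decomposition of `w`. -/
def BruhatLE (n : ℕ) (v w : Equiv.Perm ℤ) : Prop :=
  ∃ Lv Lw : List ℕ, IsReducedWord n v Lv ∧ IsReducedWord n w Lw ∧ Lv.Sublist Lw

/-- Strict Bruhat order. -/
def BruhatLT (n : ℕ) (v w : Equiv.Perm ℤ) : Prop := BruhatLE n v w ∧ v ≠ w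

/-- The reflection in the root `ε_i - ε_j` (`plus = false`), i.e. the permutation
`(i,j)(-i,-j)`, or in `ε_i + ε_j` (`plus = true`), i.e. `(i,-j)(-i,j)`. -/
def rootRefl (i j : ℤ) (plus : Bool) : Equiv.Perm ℤ :=
  if plus then Equiv.swap i (-j) * Equiv.swap (-i) j
  else Equiv.swap i j * Equiv.swap (-i) (-j)

/-- The word `[j, j+1, …, n-1, n, n-2, n-3, …, 2, 1]`,
i.e. `u = s_j s_{j+1} ⋯ s_{n-1} sₙ s_{n-2} s_{n-3} ⋯ s₂ s₁`. -/
def uWordPlus (n j : ℕ) : List ℕ :=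
  ((List.range (n - j)).map fun t => j + t) ++ [n] ++ (List.range (n - 2)).reverse.map (· + 1)


/-!
The inversion number `invCount` (the number of positive roots `εᵢ ± εⱼ` sent to negative roots)
changes by one under right multiplication by a simple reflection, and every element `≠ 1` of `Dₙ`
has a descent; hence `invCount` is the length on `Dₙ`, and words of that length are reduced.

Since `w` is an involution, `v⁻¹ = w u`, and `g₀ = u s₁ = sₙ s_{n-2} ⋯ s₂`. As `w 1 = -n`, the
element `y = g₀⁻¹ w u` fixes `1` and `2`, and left multiplication of such a `y` by `g₀` adds
exactly the `n - 2` inversions `(2, j)`. So `ℓ(v⁻¹) = ℓ(g₀) + ℓ(y)`, and a reduced word of `g₀`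
followed by one of `y` is a reduced word of `v⁻¹`.
-/

open Finset

lemma simpleRefl_apply_of_lt {n k : ℕ} (hk1 : 1 ≤ k) (hk : k < n) (i : ℤ) :
    simpleRefl n k i = if i = k then (k : ℤ) + 1 else if i = (k : ℤ) + 1 then k
      else if i = -(k : ℤ) then -(k : ℤ) - 1 else if i = -(k : ℤ) - 1 then -(k : ℤ) else i := by
  simp only [simpleRefl, if_pos hk, Perm.mul_apply, swap_apply_def]
  split_ifs <;> omega

lemma simpleRefl_self_apply {n : ℕ} (hn : 2 ≤ n) (i : ℤ) :
    simpleRefl n n i = if i = (n : ℤ) - 1 then -(n : ℤ) else if i = -(n : ℤ) then (n : ℤ) - 1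
      else if i = n then 1 - (n : ℤ) else if i = 1 - (n : ℤ) then n else i := by
  simp only [simpleRefl, lt_irrefl, if_false, Perm.mul_apply, swap_apply_def]
  split_ifs <;> omega

lemma simpleRefl_mul_self {n k : ℕ} (hn : 2 ≤ n) (hk1 : 1 ≤ k) (hk : k ≤ n) :
    simpleRefl n k * simpleRefl n k = 1 := by
  ext i
  obtain hk | rfl := hk.lt_or_eq
  · simp only [Perm.mul_apply, Perm.one_apply, simpleRefl_apply_of_lt hk1 hk]
    split_ifs <;> omega
  · simp only [Perm.mul_apply, Perm.one_apply, simpleRefl_self_apply hn]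
    split_ifs <;> omega

lemma mul_simpleRefl_apply_of_lt {n k : ℕ} (hk1 : 1 ≤ k) (hk : k < n) (x : Perm ℤ) {i : ℤ}
    (hi : 1 ≤ i) : (x * simpleRefl n k) i = x (swap (k : ℤ) (k + 1) i) := by
  simp only [Perm.mul_apply, simpleRefl_apply_of_lt hk1 hk, swap_apply_def]
  congr 1
  split_ifs <;> omega

lemma wordProd_nil (n : ℕ) : wordProd n [] = 1 := rfl

lemma wordProd_cons (n k : ℕ) (L : List ℕ) :
    wordProd n (k :: L) = simpleRefl n k * wordProd n L := by
  simp [wordProd]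

lemma wordProd_append (n : ℕ) (L M : List ℕ) :
    wordProd n (L ++ M) = wordProd n L * wordProd n M := by
  simp [wordProd]

lemma wordProd_singleton (n k : ℕ) : wordProd n [k] = simpleRefl n k := by
  simp [wordProd]

lemma IsWord.of_append_left {n : ℕ} {L M : List ℕ} (h : IsWord n (L ++ M)) : IsWord n L :=
  fun i hi => h i (List.mem_append_left M hi)

lemma IsWord.append {n : ℕ} {L M : List ℕ} (hL : IsWord n L) (hM : IsWord n M) :
    IsWord n (L ++ M) := by
  intro i hi
  obtain hi | hi := List.mem_append.mp hi
  exacts [hL i hi, hM i hi]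

lemma isWord_singleton {n k : ℕ} : IsWord n [k] ↔ 1 ≤ k ∧ k ≤ n := by
  simp [IsWord]

/-- Signed permutations: the Weyl group of type `Bₙ`, realized as `Dₙ` is in `IsD`. -/
structure IsSignedPerm (n : ℕ) (x : Perm ℤ) : Prop where
  apply_neg : ∀ i, x (-i) = -x i
  apply_of_lt_abs : ∀ i : ℤ, (n : ℤ) < |i| → x i = i

/-- `Dₙ` is the kernel of this character of the group of signed permutations. -/
noncomputable def signProd (n : ℕ) (x : Perm ℤ) : ℤ := ∏ i ∈ Icc (1 : ℤ) n, (x i).sign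

namespace IsSignedPerm

variable {n : ℕ} {x y : Perm ℤ}

lemma one (n : ℕ) : IsSignedPerm n 1 := ⟨fun _ => rfl, fun _ _ => rfl⟩

lemma mul (hx : IsSignedPerm n x) (hy : IsSignedPerm n y) : IsSignedPerm n (x * y) :=
  ⟨fun i => by simp [Perm.mul_apply, hx.apply_neg, hy.apply_neg],
    fun i hi => by simp [Perm.mul_apply, hx.apply_of_lt_abs i hi, hy.apply_of_lt_abs i hi]⟩

lemma inv (hx : IsSignedPerm n x) : IsSignedPerm n x⁻¹ :=
  ⟨fun i => x.injective (by simp [hx.apply_neg]),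
    fun i hi => Perm.inv_eq_iff_eq.mpr (hx.apply_of_lt_abs i hi).symm⟩

lemma apply_zero (hx : IsSignedPerm n x) : x 0 = 0 := by
  have := hx.apply_neg 0
  simp only [neg_zero] at this
  omega

lemma apply_eq_sign_mul_apply_abs (hx : IsSignedPerm n x) (a : ℤ) :
    x a = a.sign * x |a| := by
  obtain h | rfl | h := lt_trichotomy a 0
  · rw [abs_of_neg h, Int.sign_eq_neg_one_of_neg h, hx.apply_neg, neg_one_mul, neg_neg]
  · rw [hx.apply_zero]; simp
  · rw [abs_of_pos h, Int.sign_eq_one_of_pos h, one_mul]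

lemma abs_apply_abs (hx : IsSignedPerm n x) (a : ℤ) : |x (|a|)| = |x a| := by
  obtain h | h := abs_choice a <;> simp [h, hx.apply_neg]

lemma abs_apply_ne_abs_apply (hx : IsSignedPerm n x) {i j : ℤ} (hij : |i| ≠ |j|) :
    |x i| ≠ |x j| := by
  intro h
  obtain h | h := abs_eq_abs.mp h
  · exact hij (by rw [x.injective h])
  · rw [← hx.apply_neg] at h
    exact hij (by rw [x.injective h, abs_neg])

lemma apply_ne_zero (hx : IsSignedPerm n x) {i : ℤ} (hi : i ≠ 0) : x i ≠ 0 := by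
  have := hx.abs_apply_ne_abs_apply (j := 0) (by simpa using hi)
  rw [hx.apply_zero] at this
  simpa using this

lemma abs_apply_le (hx : IsSignedPerm n x) {i : ℤ} (hi : |i| ≤ n) : |x i| ≤ n := by
  by_contra! h
  have := x.injective (hx.apply_of_lt_abs _ h)
  rw [this] at h
  omega

lemma eq_one_of_forall_apply_eq (hx : IsSignedPerm n x)
    (h : ∀ i : ℤ, 1 ≤ i → i ≤ n → x i = i) : x = 1 := by
  have hpos : ∀ i : ℤ, 0 < i → x i = i := fun i hi =>
    if hin : i ≤ n then h i hi hin else hx.apply_of_lt_abs i (by rw [abs_of_pos hi]; omega)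
  ext i
  obtain hi | rfl | hi := lt_trichotomy i 0
  · have := hx.apply_neg (-i)
    rw [neg_neg, hpos (-i) (by omega)] at this
    simp [this]
  · exact hx.apply_zero
  · exact hpos i hi

lemma eq_one_of_pos_of_lt_succ (hx : IsSignedPerm n x)
    (hpos : ∀ i : ℤ, 1 ≤ i → i ≤ n → 0 < x i) (hlt : ∀ i : ℤ, 1 ≤ i → i < n → x i < x (i + 1)) :
    x = 1 := by
  have hge : ∀ i : ℤ, 1 ≤ i → i ≤ n → i ≤ x i := by
    intro i hi
    induction i, hi using Int.leInduction with
    | base => exact fun _ => hpos 1 le_rfl (by omega)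
    | succ i hi ih =>
      intro h
      have := hlt i hi (by omega)
      have := ih (by omega)
      omega
  have hle : ∀ i : ℤ, i ≤ n → 1 ≤ i → x i ≤ i := by
    intro i hi
    induction i, hi using Int.leInductionDown with
    | base =>
      intro _
      have := hx.abs_apply_le (i := n) (by simp)
      rwa [abs_of_pos (hpos n (by omega) le_rfl)] at this
    | pred i hi ih =>
      intro h
      have := hlt (i - 1) h (by omega)
      rw [sub_add_cancel] at this
      have := ih (by omega)
      omega
  exact hx.eq_one_of_forall_apply_eq fun i h1 h2 => le_antisymm (hle i h2 h1) (hge i h1 h2)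

lemma abs_apply_mem_Icc (hx : IsSignedPerm n x) {i : ℤ} (hi : i ∈ Icc (1 : ℤ) n) :
    |x i| ∈ Icc (1 : ℤ) n := by
  rw [mem_Icc] at hi ⊢
  exact ⟨Int.one_le_abs (hx.apply_ne_zero (by omega)),
    hx.abs_apply_le (by rw [abs_of_pos (by omega : 0 < i)]; omega)⟩

lemma signProd_mul (hx : IsSignedPerm n x) (hy : IsSignedPerm n y) :
    signProd n (x * y) = signProd n x * signProd n y := by
  have abs_inv_abs : ∀ {z : Perm ℤ}, IsSignedPerm n z → ∀ i ∈ Icc (1 : ℤ) n, |z⁻¹ (|z i|)| = i :=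
    fun {z} hz i hi => by
      rw [hz.inv.abs_apply_abs, Perm.inv_eq_iff_eq.mpr rfl, abs_of_pos (by simp at hi; omega)]
  have hreindex : ∏ i ∈ Icc (1 : ℤ) n, (x (|y i|)).sign = signProd n x :=
    prod_nbij' (fun i => |y i|) (fun j => |y⁻¹ j|) (fun i hi => hy.abs_apply_mem_Icc hi)
      (fun j hj => hy.inv.abs_apply_mem_Icc hj) (abs_inv_abs hy)
      (fun j hj => by simpa using abs_inv_abs hy.inv j hj) (fun _ _ => rfl)
  calc signProd n (x * y) = ∏ i ∈ Icc (1 : ℤ) n, (y i).sign * (x (|y i|)).sign := by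
        refine prod_congr rfl fun i _ => ?_
        rw [Perm.mul_apply, hx.apply_eq_sign_mul_apply_abs, Int.sign_mul, Int.sign_sign]
    _ = signProd n x * signProd n y := by rw [prod_mul_distrib, hreindex, mul_comm]; rfl

lemma signProd_eq_neg_one_pow (hx : IsSignedPerm n x) :
    signProd n x = (-1) ^ ((Icc (1 : ℤ) n).filter fun i => x i < 0).card := by
  have hsign : ∀ i ∈ Icc (1 : ℤ) n, (x i).sign = if x i < 0 then -1 else 1 := fun i hi => by
    have := hx.apply_ne_zero (i := i) (by simp at hi; omega)
    split_ifs with h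
    · exact Int.sign_eq_neg_one_of_neg h
    · exact Int.sign_eq_one_of_pos (by omega)
  rw [signProd, prod_congr rfl hsign, prod_ite, prod_const, prod_const_one, mul_one]

end IsSignedPerm

lemma isSignedPerm_simpleRefl {n k : ℕ} (hn : 2 ≤ n) (hk1 : 1 ≤ k) (hk : k ≤ n) :
    IsSignedPerm n (simpleRefl n k) := by
  refine ⟨fun i => ?_, fun i hi => ?_⟩
  all_goals obtain hk | rfl := hk.lt_or_eq
  · simp only [simpleRefl_apply_of_lt hk1 hk]; split_ifs <;> omega
  · simp only [simpleRefl_self_apply hn]; split_ifs <;> omega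
  · rw [simpleRefl_apply_of_lt hk1 hk]; simp only [abs_eq_max_neg] at hi; split_ifs <;> omega
  · rw [simpleRefl_self_apply hn]; simp only [abs_eq_max_neg] at hi; split_ifs <;> omega


lemma signProd_one (n : ℕ) : signProd n 1 = 1 :=
  prod_eq_one fun i hi => Int.sign_eq_one_of_pos (by rw [Perm.one_apply]; simp at hi; omega)

lemma isD_iff {n : ℕ} {x : Perm ℤ} : IsD n x ↔ IsSignedPerm n x ∧ signProd n x = 1 := by
  refine ⟨fun h => ⟨⟨h.1, h.2.1⟩, ?_⟩, fun ⟨h, h1⟩ => ⟨h.1, h.2, ?_⟩⟩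
  · rw [IsSignedPerm.signProd_eq_neg_one_pow ⟨h.1, h.2.1⟩, h.2.2.neg_one_pow]
  · rwa [h.signProd_eq_neg_one_pow, neg_one_pow_eq_one_iff_even (by decide)] at h1

namespace IsD

variable {n : ℕ} {x y : Perm ℤ}

lemma isSignedPerm (hx : IsD n x) : IsSignedPerm n x := (isD_iff.mp hx).1

lemma one (n : ℕ) : IsD n 1 := isD_iff.mpr ⟨IsSignedPerm.one n, signProd_one n⟩

lemma mul (hx : IsD n x) (hy : IsD n y) : IsD n (x * y) := by
  rw [isD_iff] at *
  exact ⟨hx.1.mul hy.1, by rw [hx.1.signProd_mul hy.1, hx.2, hy.2, one_mul]⟩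

lemma inv (hx : IsD n x) : IsD n x⁻¹ := by
  rw [isD_iff] at *
  refine ⟨hx.1.inv, ?_⟩
  have := hx.1.inv.signProd_mul hx.1
  rwa [inv_mul_cancel, signProd_one, hx.2, mul_one, eq_comm] at this

end IsD

lemma isD_simpleRefl {n k : ℕ} (hn : 2 ≤ n) (hk1 : 1 ≤ k) (hk : k ≤ n) :
    IsD n (simpleRefl n k) := by
  have hs := isSignedPerm_simpleRefl hn hk1 hk
  refine ⟨hs.apply_neg, hs.apply_of_lt_abs, ?_⟩
  obtain hk | rfl := hk.lt_or_eq
  · have : (Icc (1 : ℤ) n).filter (fun i => simpleRefl n k i < 0) = ∅ := by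
      simp only [filter_eq_empty_iff, mem_Icc, simpleRefl_apply_of_lt hk1 hk]
      intro i hi
      split_ifs <;> omega
    simp [this]
  · have : (Icc (1 : ℤ) k).filter (fun i => simpleRefl k k i < 0) = {(k : ℤ) - 1, (k : ℤ)} := by
      ext i
      simp only [mem_filter, mem_Icc, simpleRefl_self_apply hn, mem_insert, mem_singleton]
      split_ifs <;> omega
    rw [this, card_pair (by omega)]
    exact even_two

lemma isD_wordProd {n : ℕ} (hn : 2 ≤ n) {L : List ℕ} (hL : IsWord n L) : IsD n (wordProd n L) := by
  induction L with
  | nil => exact IsD.one n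
  | cons k L ih =>
    rw [wordProd_cons]
    have hk := hL k List.mem_cons_self
    exact (isD_simpleRefl hn hk.1 hk.2).mul (ih fun i hi => hL i (List.mem_cons_of_mem k hi))

/-- For `i < j`, `x i = a` and `x j = b`: the number of the positive roots `εᵢ - εⱼ`, `εᵢ + εⱼ`
sent by `x` to negative roots. -/
noncomputable def invPair (a b : ℤ) : ℕ :=
  if 0 < a then (if |b| < |a| then 1 else 0) else if |a| < |b| then 2 else 1

noncomputable def invCount (n : ℕ) (x : Perm ℤ) : ℕ :=
  ∑ p ∈ Icc (1 : ℤ) n ×ˢ Icc (1 : ℤ) n, if p.1 < p.2 then invPair (x p.1) (x p.2) else 0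

lemma invPair_neg_right (a b : ℤ) : invPair a (-b) = invPair a b := by
  simp [invPair]

lemma invPair_swap_eq_or {a b : ℤ} (hab : |a| ≠ |b|) :
    invPair b a = invPair a b + 1 ∨ invPair a b = invPair b a + 1 := by
  have := abs_eq_max_neg (a := a)
  have := abs_eq_max_neg (a := b)
  unfold invPair
  split_ifs <;> omega

lemma invPair_one_left {b : ℤ} (hb : b ≠ 0) : invPair 1 b = 0 := by
  simp [invPair, hb]

lemma invPair_two_left {b : ℤ} (hb : 3 ≤ |b|) : invPair 2 b = 0 := by
  simp [invPair]
  omega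

lemma invPair_neg_left {a b : ℤ} (ha : 0 < a) (hb : |b| ≤ a) : invPair (-a) b = 1 := by
  rw [invPair, if_neg (by omega), abs_neg, abs_of_pos ha, if_neg (by omega)]

lemma invCount_one (n : ℕ) : invCount n 1 = 0 := by
  refine sum_eq_zero fun p hp => ?_
  simp only [mem_product, mem_Icc] at hp
  split_ifs
  · simp only [invPair, Perm.one_apply, abs_of_pos (by omega : 0 < p.1),
      abs_of_pos (by omega : 0 < p.2)]
    split_ifs <;> omega
  · rfl

lemma Finset.sum_add_eq_sum_add_of_eq_off_two {α M : Type*} [DecidableEq α] [AddCommMonoid M]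
    {s : Finset α} {f g : α → M} {a b : α} (ha : a ∈ s) (hb : b ∈ s) (hga : g a = 0)
    (hfb : f b = 0) (h : ∀ p ∈ s, p ≠ a → p ≠ b → f p = g p) :
    ∑ p ∈ s, f p + g b = ∑ p ∈ s, g p + f a := by
  have key : ∀ p ∈ s, f p + (if p = b then g b else 0) = g p + (if p = a then f a else 0) := by
    intro p hp
    by_cases hpa : p = a <;> by_cases hpb : p = b <;> simp_all
  simpa [sum_add_distrib, ha, hb] using sum_congr rfl key

lemma invCount_add_of_swap {n : ℕ} {x x' : Perm ℤ} {m : ℤ} (hm : 1 ≤ m) (hmn : m + 1 ≤ n)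
    (h : ∀ i j : ℤ, 1 ≤ i → j ≤ n → i < j → (i, j) ≠ (m, m + 1) →
      invPair (x' i) (x' j) = invPair (x (swap m (m + 1) i)) (x (swap m (m + 1) j))) :
    invCount n x' + invPair (x m) (x (m + 1)) = invCount n x + invPair (x' m) (x' (m + 1)) := by
  set σ := swap m (m + 1)
  set S := Icc (1 : ℤ) n ×ˢ Icc (1 : ℤ) n
  have hσS : ∀ p : ℤ × ℤ, p ∈ S ↔ (σ p.1, σ p.2) ∈ S := fun p => by
    simp only [S, σ, mem_product, mem_Icc, swap_apply_def]
    split_ifs <;> omega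
  have hreindex : invCount n x =
      ∑ p ∈ S, if σ p.1 < σ p.2 then invPair (x (σ p.1)) (x (σ p.2)) else 0 :=
    (sum_equiv (σ.prodCongr σ) hσS fun _ _ => rfl).symm
  have hσm : σ m = m + 1 := swap_apply_left _ _
  have hσm' : σ (m + 1) = m := swap_apply_right _ _
  have := Finset.sum_add_eq_sum_add_of_eq_off_two (s := S) (a := (m, m + 1)) (b := (m + 1, m))
    (f := fun p => if p.1 < p.2 then invPair (x' p.1) (x' p.2) else 0)
    (g := fun p => if σ p.1 < σ p.2 then invPair (x (σ p.1)) (x (σ p.2)) else 0)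
    (by simp [S]; omega) (by simp [S]; omega) (by simp [hσm, hσm']) (by simp)
    (fun p hp hpa hpb => by
      simp only [S, mem_product, mem_Icc] at hp
      have hlt : σ p.1 < σ p.2 ↔ p.1 < p.2 := by
        simp only [σ, swap_apply_def, ne_eq, Prod.ext_iff] at hpa hpb ⊢
        split_ifs <;> omega
      simp only [hlt]
      split_ifs with hp12
      · exact h p.1 p.2 hp.1.1 hp.2.2 hp12 hpa
      · rfl)
  simp only [hσm, hσm', lt_add_iff_pos_right, zero_lt_one, if_true] at this
  rw [hreindex]
  exact this

lemma invCount_mul_simpleRefl_of_lt {n k : ℕ} (hk1 : 1 ≤ k) (hk : k < n) (x : Perm ℤ) :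
    invCount n (x * simpleRefl n k) + invPair (x k) (x (k + 1)) =
      invCount n x + invPair (x (k + 1)) (x k) := by
  have hx' := fun (i : ℤ) (hi : 1 ≤ i) => mul_simpleRefl_apply_of_lt hk1 hk x hi
  have := invCount_add_of_swap (n := n) (x := x) (x' := x * simpleRefl n k) (m := k) (by omega)
    (by omega) fun i j hi _ hij _ => by rw [hx' i hi, hx' j (by omega)]
  rwa [hx' k (by omega), hx' (k + 1) (by omega), swap_apply_left, swap_apply_right] at this

lemma invCount_mul_simpleRefl_self {n : ℕ} (hn : 2 ≤ n) {x : Perm ℤ} (hx : IsSignedPerm n x) :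
    invCount n (x * simpleRefl n n) + invPair (x (n - 1)) (-x n) =
      invCount n x + invPair (-x n) (x (n - 1)) := by
  have hfix : ∀ i : ℤ, 1 ≤ i → i ≤ n - 2 → (x * simpleRefl n n) i = x i := fun i _ _ => by
    rw [Perm.mul_apply, simpleRefl_self_apply hn]
    split_ifs <;> omega
  have hpen : (x * simpleRefl n n) (n - 1) = -x n := by
    rw [Perm.mul_apply, simpleRefl_self_apply hn, if_pos rfl, hx.apply_neg]
  have htop : (x * simpleRefl n n) n = -x (n - 1) := by
    rw [Perm.mul_apply, simpleRefl_self_apply hn, if_neg (by omega), if_neg (by omega), if_pos rfl,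
      show 1 - (n : ℤ) = -(n - 1) by ring, hx.apply_neg]
  have := invCount_add_of_swap (n := n) (x := x) (x' := x * simpleRefl n n) (m := n - 1)
    (by omega) (by omega) fun i j hi hj hij hne => by
      have hi' : i ≤ n - 2 := by simp only [ne_eq, Prod.ext_iff, not_and] at hne; omega
      have hσi : swap ((n : ℤ) - 1) (n - 1 + 1) i = i :=
        swap_apply_of_ne_of_ne (by omega) (by omega)
      rw [hfix i hi hi', hσi]
      obtain hj' | rfl | rfl : j ≤ n - 2 ∨ j = n - 1 ∨ j = n := by omega
      · rw [hfix j (by omega) hj', swap_apply_of_ne_of_ne (by omega) (by omega)]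
      · rw [hpen, swap_apply_left, sub_add_cancel, invPair_neg_right]
      · rw [htop, sub_add_cancel, swap_apply_right, invPair_neg_right]
  rw [sub_add_cancel, hpen, htop] at this
  simpa only [invPair_neg_right] using this

lemma invCount_mul_simpleRefl {n k : ℕ} (hn : 2 ≤ n) (hk1 : 1 ≤ k) (hk : k ≤ n) {x : Perm ℤ}
    (hx : IsSignedPerm n x) :
    invCount n (x * simpleRefl n k) = invCount n x + 1 ∨
      invCount n x = invCount n (x * simpleRefl n k) + 1 := by
  obtain hk | rfl := hk.lt_or_eq
  · have := invCount_mul_simpleRefl_of_lt hk1 hk x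
    have := invPair_swap_eq_or (hx.abs_apply_ne_abs_apply (i := k) (j := k + 1)
      (by simp only [abs_eq_max_neg]; omega))
    omega
  · have := invCount_mul_simpleRefl_self hn hx
    have := invPair_swap_eq_or (a := x (k - 1)) (b := -x k)
      (by rw [abs_neg]; exact hx.abs_apply_ne_abs_apply (by simp only [abs_eq_max_neg]; omega))
    omega

lemma invCount_wordProd_le {n : ℕ} (hn : 2 ≤ n) {L : List ℕ} (hL : IsWord n L) :
    invCount n (wordProd n L) ≤ L.length := by
  induction L using List.reverseRecOn with
  | nil => simp [wordProd_nil, invCount_one]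
  | append_singleton M k ih =>
    have hk := isWord_singleton.mp (fun i hi => hL i (List.mem_append_right M hi))
    rw [wordProd_append, wordProd_singleton, List.length_append, List.length_singleton]
    have := ih hL.of_append_left
    have := invCount_mul_simpleRefl hn hk.1 hk.2 (isD_wordProd hn hL.of_append_left).isSignedPerm
    omega

lemma neg_imp_neg_and_lt_of_invPair_eq {a b : ℤ} (hb : b ≠ 0)
    (h : invPair b a = invPair a b + 1) : (a < 0 → b < 0) ∧ (0 < b → a < b) := by
  have := abs_eq_max_neg (a := a)
  have := abs_eq_max_neg (a := b)
  unfold invPair at h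
  split_ifs at h <;> omega

/-- Without descents, `z 1 ≺ z 2 ≺ ⋯ ≺ z n` and `z (n-1) ≺ -z n` in the order
`1 ≺ ⋯ ≺ n ≺ -n ≺ ⋯ ≺ -1`: so `z = 1`, or `z n` is the only negative value, which is excluded
in `Dₙ`. -/
lemma exists_descent {n : ℕ} (hn : 2 ≤ n) {z : Perm ℤ} (hz : IsD n z) (hne : z ≠ 1) :
    ∃ k, 1 ≤ k ∧ k ≤ n ∧ invCount n (z * simpleRefl n k) + 1 = invCount n z := by
  by_contra! hasc
  have hs := hz.isSignedPerm
  have hne0 : ∀ i : ℤ, 1 ≤ i → z i ≠ 0 := fun i hi => hs.apply_ne_zero (by omega)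
  have hasc' : ∀ k : ℕ, 1 ≤ k → k ≤ n →
      invCount n (z * simpleRefl n k) = invCount n z + 1 := fun k h1 h2 =>
    (invCount_mul_simpleRefl hn h1 h2 hs).resolve_right fun h => hasc k h1 h2 h.symm
  have hchain : ∀ i : ℤ, 1 ≤ i → i < n →
      (z i < 0 → z (i + 1) < 0) ∧ (0 < z (i + 1) → z i < z (i + 1)) := by
    intro i hi1 hi2
    lift i to ℕ using (by omega)
    have := invCount_mul_simpleRefl_of_lt (n := n) (k := i) (by omega) (by omega) z
    have := hasc' i (by omega) (by omega)
    exact neg_imp_neg_and_lt_of_invPair_eq (hne0 _ (by omega)) (by omega)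
  have htop : (z (n - 1) < 0 → -z n < 0) ∧ (0 < -z n → z (n - 1) < -z n) := by
    have := invCount_mul_simpleRefl_self hn hs
    have := hasc' n (by omega) le_rfl
    exact neg_imp_neg_and_lt_of_invPair_eq (neg_ne_zero.mpr (hne0 _ (by omega))) (by omega)
  have hneg : ∀ i j : ℤ, 1 ≤ i → i ≤ j → j ≤ n → z i < 0 → z j < 0 := by
    intro i j hi hij hj hzi
    induction j, hij using Int.leInduction with
    | base => exact hzi
    | succ j hij ih => exact (hchain j (by omega) (by omega)).1 (ih (by omega))
  by_cases hzn : 0 < z n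
  · have hpos : ∀ i : ℤ, 1 ≤ i → i ≤ n → 0 < z i := fun i hi1 hi2 => by
      have := hne0 i hi1
      by_contra
      have := hneg i n hi1 hi2 le_rfl (by omega)
      omega
    exact hne (hs.eq_one_of_pos_of_lt_succ hpos fun i h1 h2 =>
      (hchain i h1 h2).2 (hpos _ (by omega) (by omega)))
  · have hzn : z n < 0 := by have := hne0 n (by omega); omega
    have hpen : 0 < z (n - 1) := by
      have := hne0 (n - 1) (by omega)
      by_contra
      exact (htop.1 (by omega)).not_gt (by omega)
    have honly : (Icc (1 : ℤ) n).filter (fun i => z i < 0) = {(n : ℤ)} := by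
      ext i
      simp only [mem_filter, mem_Icc, mem_singleton]
      constructor
      · rintro ⟨⟨hi1, hi2⟩, hzi⟩
        by_contra hin
        have := hneg i (n - 1) hi1 (by omega) (by omega) hzi
        omega
      · rintro rfl
        exact ⟨⟨by omega, le_rfl⟩, hzn⟩
    have := hz.2.2
    rw [honly, card_singleton] at this
    exact Nat.not_even_one this

lemma exists_word_length_eq_invCount {n : ℕ} (hn : 2 ≤ n) {z : Perm ℤ} (hz : IsD n z) :
    ∃ L, IsWord n L ∧ L.length = invCount n z ∧ wordProd n L = z := by
  induction hN : invCount n z using Nat.strong_induction_on generalizing z with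
  | _ N ih =>
    by_cases hone : z = 1
    · subst hone
      exact ⟨[], fun _ h => absurd h List.not_mem_nil, by simp [← hN, invCount_one], rfl⟩
    obtain ⟨k, hk1, hk, hdesc⟩ := exists_descent hn hz hone
    obtain ⟨L, hL, hlen, hprod⟩ := ih _ (by omega) (hz.mul (isD_simpleRefl hn hk1 hk)) rfl
    refine ⟨L ++ [k], hL.append (isWord_singleton.mpr ⟨hk1, hk⟩), by simp [hlen]; omega, ?_⟩
    rw [wordProd_append, hprod, wordProd_singleton, mul_assoc, simpleRefl_mul_self hn hk1 hk,
      mul_one]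

lemma isReducedWord_of_length_eq_invCount {n : ℕ} (hn : 2 ≤ n) {L : List ℕ} (hL : IsWord n L)
    (hlen : L.length = invCount n (wordProd n L)) : IsReducedWord n (wordProd n L) L := by
  refine ⟨hL, rfl, le_antisymm ?_ (Nat.sInf_le ⟨L, hL, rfl, rfl⟩)⟩
  refine le_csInf ⟨_, L, hL, rfl, rfl⟩ ?_
  rintro _ ⟨M, hM, rfl, hMprod⟩
  rw [hlen, ← hMprod]
  exact invCount_wordProd_le hn hM

def gZeroWord (n : ℕ) : List ℕ := n :: (List.range (n - 3)).reverse.map (· + 2)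

lemma uWordPlus_self {n : ℕ} (hn : 3 ≤ n) : uWordPlus n n = gZeroWord n ++ [1] := by
  obtain ⟨m, rfl⟩ : ∃ m, n = m + 3 := ⟨n - 3, by omega⟩
  simp [uWordPlus, gZeroWord, show m + 3 - 2 = m + 1 by omega, List.range_succ_eq_map,
    Function.comp_def]

lemma isWord_gZeroWord {n : ℕ} (hn : 3 ≤ n) : IsWord n (gZeroWord n) := by
  intro i hi
  simp only [gZeroWord, List.mem_cons, List.mem_map, List.mem_reverse, List.mem_range] at hi
  rcases hi with rfl | ⟨t, ht, rfl⟩ <;> omega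

lemma length_gZeroWord {n : ℕ} (hn : 3 ≤ n) : (gZeroWord n).length = n - 2 := by
  simp [gZeroWord]
  omega

lemma wordProd_range_reverse_apply {n m : ℕ} (hm : m + 1 < n) {i : ℤ} (hi : 1 ≤ i) :
    wordProd n ((List.range m).reverse.map (· + 2)) i =
      if i = 2 then (m : ℤ) + 2 else if 3 ≤ i ∧ i ≤ (m : ℤ) + 2 then i - 1 else i := by
  induction m with
  | zero => simp [wordProd_nil]; omega
  | succ m ih =>
    rw [List.range_succ, List.reverse_append, List.reverse_singleton, List.singleton_append,
      List.map_cons, wordProd_cons, Perm.mul_apply, ih (by omega),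
      simpleRefl_apply_of_lt (by omega) hm]
    push_cast
    split_ifs <;> omega

lemma wordProd_gZeroWord_apply {n : ℕ} (hn : 3 ≤ n) {i : ℤ} (hi1 : 1 ≤ i) (hin : i ≤ n) :
    wordProd n (gZeroWord n) i =
      if i = 1 then 1 else if i = 2 then -(n : ℤ) else if i = n then 1 - (n : ℤ) else i - 1 := by
  rw [gZeroWord, wordProd_cons, Perm.mul_apply, wordProd_range_reverse_apply (by omega) hi1,
    simpleRefl_self_apply (by omega), Nat.cast_sub (by omega)]
  push_cast
  split_ifs <;> omega

lemma wordProd_gZeroWord_apply_of_three_le_abs {n : ℕ} (hn : 3 ≤ n) {a : ℤ} (ha : 3 ≤ |a|)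
    (ha' : |a| ≤ n) : wordProd n (gZeroWord n) a =
      if a = n then 1 - (n : ℤ) else if a = -n then (n : ℤ) - 1 else if 0 < a then a - 1
      else a + 1 := by
  have := abs_eq_max_neg (a := a)
  obtain ha0 | ha0 : 0 < a ∨ a < 0 := by omega
  · rw [wordProd_gZeroWord_apply hn (by omega) (by omega)]
    split_ifs <;> omega
  · rw [← neg_neg a, (isD_wordProd (by omega) (isWord_gZeroWord hn)).isSignedPerm.apply_neg,
      wordProd_gZeroWord_apply hn (by omega) (by omega)]
    split_ifs <;> omega

lemma abs_wordProd_gZeroWord_apply {n : ℕ} (hn : 3 ≤ n) {a : ℤ} (ha : 3 ≤ |a|) (ha' : |a| ≤ n) :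
    |wordProd n (gZeroWord n) a| = |a| - 1 ∧
      (0 < wordProd n (gZeroWord n) a ↔ (0 < a ↔ |a| ≠ n)) := by
  have hga := wordProd_gZeroWord_apply_of_three_le_abs hn ha ha'
  have := abs_eq_max_neg (a := a)
  have := abs_eq_max_neg (a := wordProd n (gZeroWord n) a)
  split_ifs at hga <;> omega

lemma invPair_wordProd_gZeroWord {n : ℕ} (hn : 3 ≤ n) {a b : ℤ} (ha : 3 ≤ |a|) (ha' : |a| ≤ n)
    (hb : 3 ≤ |b|) (hb' : |b| ≤ n) (hab : |a| ≠ |b|) :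
    invPair (wordProd n (gZeroWord n) a) (wordProd n (gZeroWord n) b) = invPair a b := by
  obtain ⟨hga, hga'⟩ := abs_wordProd_gZeroWord_apply hn ha ha'
  obtain ⟨hgb, hgb'⟩ := abs_wordProd_gZeroWord_apply hn hb hb'
  unfold invPair
  rw [hga, hgb]
  split_ifs <;> omega

lemma wordProd_uWordPlus_self {n : ℕ} (hn : 3 ≤ n) :
    wordProd n (uWordPlus n n) = wordProd n (gZeroWord n) * simpleRefl n 1 := by
  rw [uWordPlus_self hn, wordProd_append, wordProd_singleton]

lemma wordProd_gZeroWord_apply_one {n : ℕ} (hn : 3 ≤ n) : wordProd n (gZeroWord n) 1 = 1 := by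
  rw [wordProd_gZeroWord_apply hn le_rfl (by omega), if_pos rfl]

lemma wordProd_gZeroWord_apply_two {n : ℕ} (hn : 3 ≤ n) : wordProd n (gZeroWord n) 2 = -n := by
  rw [wordProd_gZeroWord_apply hn (by norm_num) (by omega), if_neg (by norm_num), if_pos rfl]

lemma IsSignedPerm.three_le_abs_apply {n : ℕ} {y : Perm ℤ} (hy : IsSignedPerm n y)
    (hy1 : y 1 = 1) (hy2 : y 2 = 2) {j : ℤ} (hj : 3 ≤ j) (hjn : j ≤ n) :
    3 ≤ |y j| ∧ |y j| ≤ n := by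
  have habs : ∀ i : ℤ, 0 ≤ i → i < 3 → |y j| ≠ |y i| := fun i hi0 hi3 =>
    hy.abs_apply_ne_abs_apply (by simp only [abs_eq_max_neg]; omega)
  have h0 := habs 0 le_rfl (by norm_num)
  have h1 := habs 1 zero_le_one (by norm_num)
  have h2 := habs 2 zero_le_two (by norm_num)
  rw [hy.apply_zero, abs_zero] at h0
  rw [hy1, abs_one] at h1
  rw [hy2, abs_two] at h2
  have := hy.abs_apply_le (i := j) (by simp only [abs_eq_max_neg]; omega)
  have := abs_nonneg (y j)
  omega

/-- The new inversions are the pairs `(2, j)`: `g₀` sends `2` to `-n` and preserves `invPair` on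
values of absolute value `≥ 3`. -/
lemma invCount_wordProd_gZeroWord_mul {n : ℕ} (hn : 3 ≤ n) {y : Perm ℤ} (hy : IsSignedPerm n y)
    (hy1 : y 1 = 1) (hy2 : y 2 = 2) :
    invCount n (wordProd n (gZeroWord n) * y) = invCount n y + (n - 2) := by
  set S := Icc (1 : ℤ) n ×ˢ Icc (1 : ℤ) n
  have hg := (isD_wordProd (by omega) (isWord_gZeroWord hn)).isSignedPerm
  have hterm : ∀ p ∈ S, (if p.1 < p.2 then invPair ((wordProd n (gZeroWord n) * y) p.1)
        ((wordProd n (gZeroWord n) * y) p.2) else 0) =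
      (if p.1 < p.2 then invPair (y p.1) (y p.2) else 0) + if p.1 = 2 ∧ 2 < p.2 then 1 else 0 := by
    intro p hp
    simp only [S, mem_product, mem_Icc] at hp
    by_cases hij : p.1 < p.2
    swap
    · rw [if_neg hij, if_neg hij, if_neg (by omega)]
    simp only [hij, if_true, Perm.mul_apply]
    obtain h | h | h : p.1 = 1 ∨ p.1 = 2 ∨ 3 ≤ p.1 := by omega
    · have hyj : y p.2 ≠ 0 := hy.apply_ne_zero (by omega)
      rw [h, hy1, wordProd_gZeroWord_apply_one hn, invPair_one_left hyj,
        invPair_one_left (hg.apply_ne_zero hyj), if_neg (by omega)]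
    · obtain ⟨hj3, hjn⟩ := hy.three_le_abs_apply hy1 hy2 (by omega) hp.2.2
      rw [h, hy2, wordProd_gZeroWord_apply_two hn,
        invPair_neg_left (by omega) (hg.abs_apply_le hjn), invPair_two_left hj3,
        if_pos ⟨rfl, by omega⟩]
    · have hi := hy.three_le_abs_apply hy1 hy2 h hp.1.2
      obtain ⟨hj3, hjn⟩ := hy.three_le_abs_apply hy1 hy2 (by omega) hp.2.2
      rw [invPair_wordProd_gZeroWord hn hi.1 hi.2 hj3 hjn
        (hy.abs_apply_ne_abs_apply (by simp only [abs_eq_max_neg]; omega)), if_neg (by omega),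
        add_zero]
  have hcount : ∑ p ∈ S, (if p.1 = 2 ∧ 2 < p.2 then 1 else 0) = n - 2 := by
    rw [← card_filter, show S.filter (fun p => p.1 = 2 ∧ 2 < p.2) = {2} ×ˢ Icc 3 (n : ℤ) by
      ext p
      simp only [S, mem_filter, mem_product, mem_Icc, mem_singleton]
      omega]
    simp only [card_product, card_singleton, Int.card_Icc, one_mul]
    omega
  rw [invCount, sum_congr rfl hterm, sum_add_distrib, hcount]
  rfl

lemma invCount_wordProd_gZeroWord {n : ℕ} (hn : 3 ≤ n) :
    invCount n (wordProd n (gZeroWord n)) = n - 2 := by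
  simpa [invCount_one] using invCount_wordProd_gZeroWord_mul hn (IsSignedPerm.one n) rfl rfl

lemma wordProd_uWordPlus_self_apply_one {n : ℕ} (hn : 3 ≤ n) :
    wordProd n (uWordPlus n n) 1 = -n := by
  rw [wordProd_uWordPlus_self hn, Perm.mul_apply, simpleRefl_apply_of_lt le_rfl (by omega)]
  norm_num [wordProd_gZeroWord_apply_two hn]

lemma wordProd_uWordPlus_self_apply_two {n : ℕ} (hn : 3 ≤ n) :
    wordProd n (uWordPlus n n) 2 = 1 := by
  rw [wordProd_uWordPlus_self hn, Perm.mul_apply, simpleRefl_apply_of_lt le_rfl (by omega)]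
  norm_num [wordProd_gZeroWord_apply_one hn]

lemma bruhatLE_mul_of_invCount_mul {n : ℕ} (hn : 2 ≤ n) {L : List ℕ} (hL : IsWord n L)
    (hlen : L.length = invCount n (wordProd n L)) {y : Perm ℤ} (hy : IsD n y)
    (hadd : invCount n (wordProd n L * y) = L.length + invCount n y) :
    BruhatLE n (wordProd n L) (wordProd n L * y) := by
  obtain ⟨M, hM, hMlen, rfl⟩ := exists_word_length_eq_invCount hn hy
  rw [← wordProd_append] at hadd ⊢
  exact ⟨L, L ++ M, isReducedWord_of_length_eq_invCount hn hL hlen,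
    isReducedWord_of_length_eq_invCount hn (hL.append hM) (by rw [hadd, List.length_append, hMlen]),
    List.sublist_append_left _ _⟩

/-- Let `n ≥ 4` and let `w` be a basic involution in the Weyl group
of type `Dₙ` with `w(1) = -n`. Let `u = sₙ s_{n-2} s_{n-3} ⋯ s₂ s₁` (the element of the
previous construction for `j = n`), `v = u⁻¹ w`, and `g₀ = u s₁`. Then `g₀ ≤ v⁻¹` in
the Bruhat order. -/
theorem statement15 (n : ℕ) (hn : 4 ≤ n)
    (w : Equiv.Perm ℤ) (hw : IsBasicInvolution n w) (hw1 : w 1 = -(n : ℤ)) :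
    BruhatLE n (wordProd n (uWordPlus n n) * simpleRefl n 1)
      ((wordProd n (uWordPlus n n))⁻¹ * w)⁻¹ := by
  obtain ⟨hwD, hww, -⟩ := hw
  have hn3 : 3 ≤ n := by omega
  set g := wordProd n (gZeroWord n)
  set u := wordProd n (uWordPlus n n)
  have hu : u = g * simpleRefl n 1 := wordProd_uWordPlus_self hn3
  have hgD : IsD n g := isD_wordProd (by omega) (isWord_gZeroWord hn3)
  have hy : IsD n (g⁻¹ * (w * u)) :=
    hgD.inv.mul (hwD.mul (hu ▸ hgD.mul (isD_simpleRefl (by omega) le_rfl (by omega))))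
  have hwn : w (-n) = 1 := by rw [← hw1, ← Perm.mul_apply, hww, Perm.one_apply]
  rw [hu, mul_assoc, simpleRefl_mul_self (by omega) le_rfl (by omega), mul_one, mul_inv_rev,
    inv_inv, inv_eq_of_mul_eq_one_left hww, ← hu, ← mul_inv_cancel_left g (w * u)]
  refine bruhatLE_mul_of_invCount_mul (by omega) (isWord_gZeroWord hn3)
    (by rw [length_gZeroWord hn3, invCount_wordProd_gZeroWord hn3]) hy ?_
  rw [invCount_wordProd_gZeroWord_mul hn3 hy.isSignedPerm, length_gZeroWord hn3, add_comm]
  · rw [Perm.mul_apply, Perm.inv_eq_iff_eq, Perm.mul_apply, wordProd_uWordPlus_self_apply_one hn3,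
      hwn, wordProd_gZeroWord_apply_one hn3]
  · rw [Perm.mul_apply, Perm.inv_eq_iff_eq, Perm.mul_apply, wordProd_uWordPlus_self_apply_two hn3,
      hw1, wordProd_gZeroWord_apply_two hn3]
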